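/- Let S be a nonnegative integrable random variable on a probability space with m := 1 − E[S] satisfying 0 ≤ m < 1, and fix T > 0. Then for every x ∈ ℝ and every σ ∈ [0,∞): C_BS(x,σ) = E[(S − e^x)₊] + m holds if and only if P_BS(x,σ) = E[(e^x − S)₊]. Consequently the implied volatility of the fully collateralised Call is well defined on all of ℝ and coincides with the Put-implied volatility: I_S^1(x) = I_S^p(x) for all x ∈ ℝ. -/

import Mathlib

open MeasureTheory Filter

/-- Standard normal cumulative distribution function. -/
noncomputable def stdNormalCDF (y : ℝ) : ℝ :=
  ∫ t in Set.Iic y, Real.exp (-t ^ 2 / 2) / Real.sqrt (2 * Real.pi)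

/-- Black-Scholes d₊ (maturity `T`, log-strike `x`, volatility `σ`). -/
noncomputable def dplus (T x σ : ℝ) : ℝ := -x / (σ * Real.sqrt T) + σ * Real.sqrt T / 2

/-- Black-Scholes d₋ (maturity `T`, log-strike `x`, volatility `σ`). -/
noncomputable def dminus (T x σ : ℝ) : ℝ := -x / (σ * Real.sqrt T) - σ * Real.sqrt T / 2

/-- Black-Scholes Call price (maturity `T`, log-strike `x`, volatility `σ`),
with the convention `CBS T x 0 = max (1 - exp x) 0`. -/
noncomputable def CBS (T x σ : ℝ) : ℝ :=
  if σ = 0 then max (1 - Real.exp x) 0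
  else stdNormalCDF (dplus T x σ) - Real.exp x * stdNormalCDF (dminus T x σ)

/-- Black-Scholes Put price (maturity `T`, log-strike `x`, volatility `σ`),
with the convention `PBS T x 0 = max (exp x - 1) 0`. -/
noncomputable def PBS (T x σ : ℝ) : ℝ :=
  if σ = 0 then max (Real.exp x - 1) 0
  else Real.exp x * stdNormalCDF (-dminus T x σ) - stdNormalCDF (-dplus T x σ)

/-!
Both claims rest on put–call parity. In the Black–Scholes model `C_BS - P_BS = 1 - eˣ` for
every `σ`, while for the model `E[(S - eˣ)₊] - E[(eˣ - S)₊] = E[S] - eˣ = 1 - m - eˣ`; adding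
the defect `m` to the Call price makes the two parities agree, which gives the equivalence.

For existence and uniqueness, `σ ↦ C_BS(x, σ)` is continuous on `[0, ∞)` and strictly
increasing there: its derivative is the vega `φ(d₊)√T > 0`, because `eˣ φ(d₋) = φ(d₊)`. It runs
from `(1 - eˣ)₊` at `σ = 0` to `1` as `σ → ∞`. The target `E[(S - eˣ)₊] + m` lies in
`[(1 - eˣ)₊, 1)`: the lower bound comes from parity and `m ≥ 0`, the upper one from
`E[(S - eˣ)₊] = E[S] - E[min(S, eˣ)]`, where `E[min(S, eˣ)] > 0` since `E[S] = 1 - m > 0`.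
-/

open ProbabilityTheory Set Topology

lemma stdNormalCDF_eq_integral (y : ℝ) :
    stdNormalCDF y = ∫ t in Iic y, gaussianPDFReal 0 1 t := by
  simp only [stdNormalCDF, gaussianPDFReal, NNReal.coe_one, mul_one, sub_zero, div_eq_inv_mul]

lemma stdNormalCDF_eq_cdf : stdNormalCDF = cdf (gaussianReal 0 1) := by
  ext y
  rw [cdf_eq_real, measureReal_def, gaussianReal_apply_eq_integral _ one_ne_zero,
    ENNReal.toReal_ofReal (setIntegral_nonneg measurableSet_Iic
      fun t _ => gaussianPDFReal_nonneg 0 1 t), stdNormalCDF_eq_integral]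

lemma stdNormalCDF_neg (y : ℝ) : stdNormalCDF (-y) = 1 - stdNormalCDF y := by
  have hsymm : (gaussianReal 0 1).map (fun t => -t) = gaussianReal 0 1 := by
    simpa using gaussianReal_map_neg (μ := 0) (v := 1)
  have := nullSingletonClass_gaussianReal (μ := 0) (v := 1) one_ne_zero
  rw [stdNormalCDF_eq_cdf, cdf_eq_real, cdf_eq_real, ← hsymm,
    map_measureReal_apply measurable_neg measurableSet_Iic, neg_preimage, neg_Iic, neg_neg, hsymm,
    ← compl_Iio, probReal_compl_eq_one_sub measurableSet_Iio, measureReal_congr Iio_ae_eq_Iic]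

lemma tendsto_stdNormalCDF_atBot : Tendsto stdNormalCDF atBot (𝓝 0) :=
  stdNormalCDF_eq_cdf ▸ tendsto_cdf_atBot _

lemma tendsto_stdNormalCDF_atTop : Tendsto stdNormalCDF atTop (𝓝 1) :=
  stdNormalCDF_eq_cdf ▸ tendsto_cdf_atTop _

lemma continuous_gaussianPDFReal (μ : ℝ) (v : NNReal) : Continuous (gaussianPDFReal μ v) := by
  unfold gaussianPDFReal; fun_prop

lemma hasDerivAt_stdNormalCDF (y : ℝ) : HasDerivAt stdNormalCDF (gaussianPDFReal 0 1 y) y := by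
  have hint : Integrable (gaussianPDFReal 0 1) := integrable_gaussianPDFReal 0 1
  have hshift :
      stdNormalCDF = fun z => stdNormalCDF 0 + ∫ t in (0 : ℝ)..z, gaussianPDFReal 0 1 t := by
    ext z
    rw [stdNormalCDF_eq_integral, stdNormalCDF_eq_integral,
      ← intervalIntegral.integral_Iic_sub_Iic hint.integrableOn hint.integrableOn]
    ring
  rw [hshift]
  exact (((continuous_gaussianPDFReal 0 1).integral_hasStrictDerivAt 0 y).hasDerivAt).const_add _

lemma continuous_stdNormalCDF : Continuous stdNormalCDF :=
  continuous_iff_continuousAt.2 fun y => (hasDerivAt_stdNormalCDF y).continuousAt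

lemma CBS_sub_PBS (T x σ : ℝ) : CBS T x σ - PBS T x σ = 1 - Real.exp x := by
  unfold CBS PBS
  split_ifs
  · simpa using max_zero_sub_max_neg_zero_eq_self (1 - Real.exp x)
  · rw [stdNormalCDF_neg, stdNormalCDF_neg]
    ring

section BlackScholes

variable {T x σ : ℝ}

lemma dminus_eq_dplus_sub : dminus T x σ = dplus T x σ - σ * √T := by
  unfold dminus dplus
  ring

lemma exp_mul_gaussianPDFReal_dminus (hT : 0 < T) (hσ : σ ≠ 0) :
    Real.exp x * gaussianPDFReal 0 1 (dminus T x σ) = gaussianPDFReal 0 1 (dplus T x σ) := by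
  have hsqrt : √T ≠ 0 := (Real.sqrt_pos.2 hT).ne'
  simp only [gaussianPDFReal, NNReal.coe_one, sub_zero, mul_one]
  rw [mul_left_comm, ← Real.exp_add]
  congr 2
  unfold dminus dplus
  field_simp
  ring

lemma differentiableAt_dplus (hT : 0 < T) (hσ : σ ≠ 0) : DifferentiableAt ℝ (dplus T x) σ := by
  have hsqrt : √T ≠ 0 := (Real.sqrt_pos.2 hT).ne'
  unfold dplus
  fun_prop (disch := exact mul_ne_zero hσ hsqrt)

lemma hasDerivAt_CBS (hT : 0 < T) (hσ : σ ≠ 0) :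
    HasDerivAt (CBS T x) (gaussianPDFReal 0 1 (dplus T x σ) * √T) σ := by
  have hd := (differentiableAt_dplus (x := x) hT hσ).hasDerivAt
  have hformula : ∀ᶠ s in 𝓝 σ, stdNormalCDF (dplus T x s) -
      Real.exp x * stdNormalCDF (dplus T x s - s * √T) = CBS T x s := by
    filter_upwards [eventually_ne_nhds hσ] with s hs
    simp only [CBS, if_neg hs, dminus_eq_dplus_sub]
  refine HasDerivAt.congr_of_eventuallyEq ?_ (hformula.mono fun _ h => h.symm)
  have h := ((hasDerivAt_stdNormalCDF _).comp σ hd).sub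
    (((hasDerivAt_stdNormalCDF _).comp σ (hd.sub ((hasDerivAt_id σ).mul_const √T))).const_mul
      (Real.exp x))
  convert h using 1
  · rfl
  rw [show (dplus T x - fun s => id s * √T) σ = dminus T x σ from dminus_eq_dplus_sub.symm,
    ← mul_assoc, exp_mul_gaussianPDFReal_dminus hT hσ]
  ring

lemma tendsto_CBS_atTop (hT : 0 < T) : Tendsto (CBS T x) atTop (𝓝 1) := by
  have hsqrt : 0 < √T := Real.sqrt_pos.2 hT
  have hvol : Tendsto (fun σ => σ * √T / 2) atTop atTop :=
    (tendsto_id.atTop_mul_const hsqrt).atTop_div_const two_pos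
  have hmoney : Tendsto (fun σ => -x / (σ * √T)) atTop (𝓝 0) :=
    tendsto_const_nhds.div_atTop (tendsto_id.atTop_mul_const hsqrt)
  have hdplus : Tendsto (dplus T x) atTop atTop := hmoney.add_atTop hvol
  have hdminus : Tendsto (dminus T x) atTop atBot := by
    refine (hmoney.add_atBot (tendsto_neg_atTop_atBot.comp hvol)).congr fun σ => ?_
    simp [dminus, sub_eq_add_neg]
  have h := (tendsto_stdNormalCDF_atTop.comp hdplus).sub
    ((tendsto_stdNormalCDF_atBot.comp hdminus).const_mul (Real.exp x))
  rw [mul_zero, sub_zero] at h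
  refine h.congr' ?_
  filter_upwards [eventually_ne_atTop 0] with σ hσ
  simp [CBS, hσ]

lemma tendsto_CBS_nhdsGT_zero (hT : 0 < T) :
    Tendsto (CBS T x) (𝓝[>] 0) (𝓝 (CBS T x 0)) := by
  have hsqrt : 0 < √T := Real.sqrt_pos.2 hT
  have hvol : Tendsto (fun σ => σ * √T / 2) (𝓝[>] 0) (𝓝 0) := by
    have hcont : Continuous fun σ : ℝ => σ * √T / 2 := by fun_prop
    simpa using (hcont.tendsto 0).mono_left nhdsWithin_le_nhds
  have hformula : (fun σ => stdNormalCDF (-x / √T * σ⁻¹ + σ * √T / 2) -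
      Real.exp x * stdNormalCDF (-x / √T * σ⁻¹ + -(σ * √T / 2))) =ᶠ[𝓝[>] 0] CBS T x := by
    filter_upwards [self_mem_nhdsWithin] with σ (hσ : 0 < σ)
    simp only [CBS, if_neg hσ.ne', dplus, dminus, mul_inv, div_eq_mul_inv]
    ring_nf
  refine Tendsto.congr' hformula ?_
  -- As σ → 0⁺ the term -x/(σ√T) of d± decides the limit through the sign of x.
  rcases lt_trichotomy x 0 with hx | rfl | hx
  · have hmoney : Tendsto (fun σ : ℝ => -x / √T * σ⁻¹) (𝓝[>] 0) atTop :=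
      tendsto_inv_nhdsGT_zero.const_mul_atTop (div_pos (neg_pos.2 hx) hsqrt)
    have h := (tendsto_stdNormalCDF_atTop.comp (hmoney.atTop_add hvol)).sub
      ((tendsto_stdNormalCDF_atTop.comp (hmoney.atTop_add hvol.neg)).const_mul (Real.exp x))
    have hlim : CBS T x 0 = 1 - Real.exp x * 1 := by
      simp [CBS, (Real.exp_lt_one_iff.2 hx).le]
    rwa [hlim]
  · have hN := continuous_stdNormalCDF.tendsto 0
    have h := (hN.comp (by simpa using hvol)).sub ((hN.comp (by simpa using hvol.neg)).const_mul 1)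
    simpa [CBS] using h
  · have hmoney : Tendsto (fun σ : ℝ => -x / √T * σ⁻¹) (𝓝[>] 0) atBot :=
      tendsto_inv_nhdsGT_zero.const_mul_atTop_of_neg
        (div_neg_of_neg_of_pos (neg_neg_of_pos hx) hsqrt)
    have h := (tendsto_stdNormalCDF_atBot.comp (hmoney.atBot_add hvol)).sub
      ((tendsto_stdNormalCDF_atBot.comp (hmoney.atBot_add hvol.neg)).const_mul (Real.exp x))
    have hlim : CBS T x 0 = 0 - Real.exp x * 0 := by
      simp [CBS, (Real.one_lt_exp_iff.2 hx).le]
    rwa [hlim]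

lemma continuousOn_CBS (hT : 0 < T) : ContinuousOn (CBS T x) (Ici 0) := by
  intro σ hσ
  rcases (mem_Ici.1 hσ).eq_or_lt with rfl | hpos
  · exact continuousWithinAt_Ioi_iff_Ici.1 (tendsto_CBS_nhdsGT_zero hT)
  · exact (hasDerivAt_CBS hT hpos.ne').continuousAt.continuousWithinAt

lemma strictMonoOn_CBS (hT : 0 < T) : StrictMonoOn (CBS T x) (Ici 0) := by
  refine strictMonoOn_of_deriv_pos (convex_Ici 0) (continuousOn_CBS hT) fun σ hσ => ?_
  rw [interior_Ici] at hσ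
  rw [(hasDerivAt_CBS hT (ne_of_gt hσ)).deriv]
  exact mul_pos (gaussianPDFReal_pos _ _ _ one_ne_zero) (Real.sqrt_pos.2 hT)

lemma existsUnique_CBS_eq (hT : 0 < T) {c : ℝ} (hlow : max (1 - Real.exp x) 0 ≤ c)
    (hup : c < 1) : ∃! σ, 0 ≤ σ ∧ CBS T x σ = c := by
  obtain ⟨b, hbc, hb⟩ :=
    (((tendsto_CBS_atTop hT).eventually_const_lt hup).and (eventually_ge_atTop 0)).exists
  obtain ⟨σ, hσ, hσc⟩ := intermediate_value_Icc hb
    ((continuousOn_CBS hT).mono Icc_subset_Ici_self) ⟨(if_pos rfl).trans_le hlow, hbc.le⟩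
  exact ⟨σ, ⟨hσ.1, hσc⟩,
    fun τ hτ => (strictMonoOn_CBS hT).injOn hτ.1 hσ.1 (hτ.2.trans hσc.symm)⟩

end BlackScholes

section CollateralisedPrices

variable {Ω : Type*} [MeasurableSpace Ω] {μ : Measure Ω} {S : Ω → ℝ}

lemma integral_call_sub_integral_put [IsProbabilityMeasure μ] (hS : Integrable S μ) (K : ℝ) :
    ∫ ω, max (S ω - K) 0 ∂μ - ∫ ω, max (K - S ω) 0 ∂μ = ∫ ω, S ω ∂μ - K := by
  have hcall : Integrable (fun ω => max (S ω - K) 0) μ := (hS.sub (integrable_const K)).pos_part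
  have hput : Integrable (fun ω => max (K - S ω) 0) μ := ((integrable_const K).sub hS).pos_part
  calc _ = ∫ ω, (S ω - K) ∂μ := by
        rw [← integral_sub hcall hput]
        congr 1 with ω
        rw [← neg_sub (S ω) K, max_zero_sub_max_neg_zero_eq_self]
    _ = _ := by rw [integral_sub hS (integrable_const K), integral_const, probReal_univ, one_smul]

lemma integral_call_lt_integral [IsFiniteMeasure μ] (hS0 : ∀ ω, 0 ≤ S ω) (hS : Integrable S μ)
    {K : ℝ} (hK : 0 < K) (hpos : 0 < ∫ ω, S ω ∂μ) :
    ∫ ω, max (S ω - K) 0 ∂μ < ∫ ω, S ω ∂μ := by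
  have hmin : Integrable (fun ω => min (S ω) K) μ := hS.inf (integrable_const K)
  have hsupport : Function.support (fun ω => min (S ω) K) = Function.support S := by
    ext ω
    rcases (hS0 ω).eq_or_lt with h | h
    · simp [← h, hK.le]
    · simp [h.ne', (lt_min h hK).ne']
  have hmin_pos : 0 < ∫ ω, min (S ω) K ∂μ := by
    rwa [integral_pos_iff_support_of_nonneg (fun ω => le_min (hS0 ω) hK.le) hmin, hsupport,
      ← integral_pos_iff_support_of_nonneg hS0 hS]
  have hcall : ∀ ω, max (S ω - K) 0 = S ω - min (S ω) K := by
    intro ω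
    rcases le_total (S ω) K with h | h <;> simp [h]
  calc ∫ ω, max (S ω - K) 0 ∂μ = ∫ ω, S ω ∂μ - ∫ ω, min (S ω) K ∂μ := by
        simp_rw [hcall]
        exact integral_sub hS hmin
    _ < ∫ ω, S ω ∂μ := sub_lt_self _ hmin_pos

end CollateralisedPrices

/-- a volatility matches the fully collateralised Call price iff it matches
the Put price; hence the fully collateralised Call implied volatility is well defined on
all of `ℝ` and coincides with the Put-implied volatility. -/
theorem fully_collateralised_call_iv_eq_put_iv
    {Ω : Type*} [MeasurableSpace Ω] (μ : Measure Ω) [IsProbabilityMeasure μ]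
    (S : Ω → ℝ) (hS : ∀ ω, 0 ≤ S ω) (hSint : Integrable S μ)
    (m : ℝ) (hm : m = 1 - ∫ ω, S ω ∂μ) (hm0 : 0 ≤ m) (hm1 : m < 1)
    (T : ℝ) (hT : 0 < T) (x : ℝ) :
    (∀ σ : ℝ, 0 ≤ σ →
      (CBS T x σ = (∫ ω, max (S ω - Real.exp x) 0 ∂μ) + m ↔
        PBS T x σ = ∫ ω, max (Real.exp x - S ω) 0 ∂μ)) ∧
    (∃! σ : ℝ, 0 ≤ σ ∧ CBS T x σ = (∫ ω, max (S ω - Real.exp x) 0 ∂μ) + m) := by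
  have hparity := integral_call_sub_integral_put hSint (Real.exp x)
  have hcall_nonneg : 0 ≤ ∫ ω, max (S ω - Real.exp x) 0 ∂μ :=
    integral_nonneg fun ω => le_max_right _ _
  have hput_nonneg : 0 ≤ ∫ ω, max (Real.exp x - S ω) 0 ∂μ :=
    integral_nonneg fun ω => le_max_right _ _
  have hcall_lt := integral_call_lt_integral hS hSint (Real.exp_pos x) (by linarith)
  refine ⟨fun σ _ => ?_, existsUnique_CBS_eq hT (max_le ?_ ?_) ?_⟩
  · have hBS := CBS_sub_PBS T x σ
    constructor <;> intro h <;> linarith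
  all_goals linarith
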